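/- arXiv:2412.17074 — 2 statements merged into one kernel-verified Lean document; each statement's English description precedes it below -/
import Mathlib

section
/- If G is a connected graph with clique number ω(G) = n(G) - 3, then n(G) - 8 ≤ dim_l(G) ≤ n(G) - 3. -/
open SimpleGraph

variable {V : Type*}

/-- `W` is a local resolving set of `G`: any two adjacent vertices outside `W`
have different distance to some vertex of `W`. -/
def IsLocalResolvingSet [Fintype V] (G : SimpleGraph V) (W : Finset V) : Prop :=
  ∀ u v : V, u ∉ W → v ∉ W → G.Adj u v → ∃ w ∈ W, G.dist u w ≠ G.dist v w

/-- The local metric dimension of `G`: minimum cardinality of a local resolving set. -/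
noncomputable def localDim [Fintype V] (G : SimpleGraph V) : ℕ :=
  sInf {k | ∃ W : Finset V, IsLocalResolvingSet G W ∧ W.card = k}

/-- `K_n^-(λ,μ)`: complete graph on `Fin n` minus the edges of a complete bipartite
subgraph between `L = [0,lam)` and `M = [lam, lam+mu)`. -/
def KnMinus (n lam mu : ℕ) : SimpleGraph (Fin n) where
  Adj u v := u ≠ v ∧ ¬((u.val < lam ∧ lam ≤ v.val ∧ v.val < lam + mu) ∨
                       (v.val < lam ∧ lam ≤ u.val ∧ u.val < lam + mu))
  symm := by
    constructor
    intro u v ⟨h1, h2⟩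
    exact ⟨h1.symm, fun h => h2 h.symm⟩
  loopless := ⟨fun u h => h.1 rfl⟩

/-- The graph `Γ₁`: a `K₄` on `{0,1,2,3}` plus edges `0-4`, `1-4`, `0-5`, `2-5`
(vertices `0,…,5` standing for `v₁,…,v₆`). -/
def Gamma1 : SimpleGraph (Fin 6) :=
  SimpleGraph.fromRel (fun u v => ((u : ℕ), (v : ℕ)) ∈
    [(0,1),(0,2),(0,3),(1,2),(1,3),(2,3),(0,4),(1,4),(0,5),(2,5)])

/-- The graph `Γ₂ = Γ₁` plus the edge `v₅v₆`. -/
def Gamma2 : SimpleGraph (Fin 6) :=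
  SimpleGraph.fromRel (fun u v => ((u : ℕ), (v : ℕ)) ∈
    [(0,1),(0,2),(0,3),(1,2),(1,3),(2,3),(0,4),(1,4),(0,5),(2,5),(4,5)])

/-- `G_ℓ`: a universal vertex (`none`) joined to the disjoint union of `ℓ` triangles. -/
def Gell (l : ℕ) : SimpleGraph (Option (Fin l × Fin 3)) where
  Adj u v := u ≠ v ∧ ∀ x y, u = some x → v = some y → x.1 = y.1
  symm := by
    constructor
    intro u v ⟨h1, h2⟩
    exact ⟨h1.symm, fun x y hx hy => (h2 y x hy hx).symm⟩
  loopless := ⟨fun u h => h.1 rfl⟩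

/-!
Fix a maximum clique `C`; at most three vertices lie outside it.

Lower bound: distances from adjacent vertices to any vertex differ by at most one, so a local
resolving set `W` must separate the vertices of `C \ W` by the parities of their distances to
`W \ C` (a vertex of `W ∩ C` is at distance one from all of them). Hence
`|C \ W| ≤ 2 ^ s` with `s = |W \ C| ≤ 3`, and `ω ≤ |W| + 2 ^ s - s ≤ |W| + 5`.

Upper bound: if any two adjacent vertices of a triple `T` are told apart by their adjacency to
some vertex outside `T`, then `V \ T` is a local resolving set. Every vertex outside `C` misses
a vertex of `C`. For `a ≠ b` outside `C` and `x ∈ C` not adjacent to `a`, the triple `{a, x, b}`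
works unless `a` and `b` are adjacent and have the same neighbours apart from `x`. If no such
triple works, the vertices outside `C` are pairwise adjacent twins over `C`, with common
neighbourhood `N ⊆ C`. Maximality of `C` leaves two vertices `q, q'` in `C \ N`, connectivity
gives some `p ∈ N`, and then `{u, p, q}` works for any `u` outside `C`.
-/

open Finset SimpleGraph

lemma SimpleGraph.Adj.dist_eq_of_dist_modEq_two {G : SimpleGraph V} {u v w : V}
    (hadj : G.Adj u v) (h : G.dist u w ≡ G.dist v w [MOD 2]) : G.dist u w = G.dist v w := by
  have := hadj.diff_dist_adj (u := w)
  rw [G.dist_comm (u := w), G.dist_comm (u := w)] at this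
  unfold Nat.ModEq at h
  omega

section LocalDim

variable [Fintype V] {G : SimpleGraph V}

lemma isLocalResolvingSet_univ : IsLocalResolvingSet G univ :=
  fun u _ hu => absurd (mem_univ u) hu

lemma localDim_le {W : Finset V} (hW : IsLocalResolvingSet G W) : localDim G ≤ #W :=
  Nat.sInf_le ⟨W, hW, rfl⟩

lemma le_localDim {k : ℕ} (h : ∀ W, IsLocalResolvingSet G W → k ≤ #W) : k ≤ localDim G :=
  le_csInf ⟨_, _, isLocalResolvingSet_univ, rfl⟩ (by rintro _ ⟨W, hW, rfl⟩; exact h W hW)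

end LocalDim

section LowerBound

variable [Fintype V] {G : SimpleGraph V}

lemma IsLocalResolvingSet.card_sdiff_le_two_pow [DecidableEq V] {W C : Finset V}
    (hW : IsLocalResolvingSet G W) (hC : G.IsClique (C : Set V)) :
    #(C \ W) ≤ 2 ^ #(W \ C) := by
  let parities : V → Finset V := fun u => (W \ C).filter fun w => Even (G.dist u w)
  calc #(C \ W) ≤ #(W \ C).powerset := by
        refine card_le_card_of_injOn parities (fun u _ => mem_powerset.2 (filter_subset _ _)) ?_
        intro u hu v hv huv
        by_contra hne
        rw [coe_sdiff, Set.mem_sdiff] at hu hv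
        have hadj := hC hu.1 hv.1 hne
        obtain ⟨w, hwW, hdist⟩ := hW u v hu.2 hv.2 hadj
        by_cases hwC : w ∈ C
        · have hu1 := dist_eq_one_iff_adj.2 (hC hu.1 hwC fun h => hu.2 (h ▸ hwW))
          have hv1 := dist_eq_one_iff_adj.2 (hC hv.1 hwC fun h => hv.2 (h ▸ hwW))
          exact hdist (hu1.trans hv1.symm)
        · have hw : w ∈ W \ C := mem_sdiff.2 ⟨hwW, hwC⟩
          have hpar : Even (G.dist u w) ↔ Even (G.dist v w) := by
            simpa [parities, hw] using congrArg (w ∈ ·) huv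
          refine hdist (hadj.dist_eq_of_dist_modEq_two ?_)
          simp only [Nat.ModEq, Nat.even_iff] at hpar ⊢
          omega
    _ = 2 ^ #(W \ C) := card_powerset _

lemma IsLocalResolvingSet.cliqueNum_le_card_add_five {W : Finset V}
    (hW : IsLocalResolvingSet G W) (hω : Fintype.card V ≤ G.cliqueNum + 3) :
    G.cliqueNum ≤ #W + 5 := by
  classical
  obtain ⟨C, hC⟩ := G.maximumClique_exists
  rw [← G.maximumClique_card_eq_cliqueNum C hC] at hω ⊢
  have hparity := hW.card_sdiff_le_two_pow hC.isClique
  have hCsplit := card_inter_add_card_sdiff C W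
  have hWsplit := card_inter_add_card_sdiff W C
  have houtside : #(W \ C) ≤ 3 := by
    have := card_le_card (sdiff_subset_sdiff (subset_univ W) (le_refl C))
    rw [← compl_eq_univ_sdiff, card_compl] at this
    omega
  have hpow : 2 ^ #(W \ C) ≤ #(W \ C) + 5 := by
    interval_cases #(W \ C) <;> norm_num
  rw [inter_comm] at hCsplit
  omega

lemma cliqueNum_le_localDim_add_five (hω : Fintype.card V ≤ G.cliqueNum + 3) :
    G.cliqueNum ≤ localDim G + 5 := by
  suffices G.cliqueNum - 5 ≤ localDim G by omega
  exact le_localDim fun W hW => by have := hW.cliqueNum_le_card_add_five hω; omega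

end LowerBound

section UpperBound

variable {G : SimpleGraph V}

def AdjSeparatedOutside (G : SimpleGraph V) (T : Finset V) (u v : V) : Prop :=
  G.Adj u v → ∃ w ∉ T, ¬(G.Adj u w ↔ G.Adj v w)

lemma AdjSeparatedOutside.of_not_adj {T : Finset V} {u v : V} (h : ¬G.Adj u v) :
    AdjSeparatedOutside G T u v :=
  fun huv => absurd huv h

lemma AdjSeparatedOutside.symm {T : Finset V} {u v : V} (h : AdjSeparatedOutside G T u v) :
    AdjSeparatedOutside G T v u :=
  fun hvu => (h hvu.symm).imp fun _ ⟨hwT, hw⟩ => ⟨hwT, fun hiff => hw hiff.symm⟩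

lemma SimpleGraph.Preconnected.exists_adj_notMem_mem (hconn : G.Preconnected) {s : Set V}
    {u v : V} (hu : u ∉ s) (hv : v ∈ s) : ∃ a ∉ s, ∃ b ∈ s, G.Adj a b := by
  obtain ⟨d, -, hd₁, hd₂⟩ := (hconn u v).some.exists_boundary_dart sᶜ hu (by simpa)
  exact ⟨d.fst, hd₁, d.snd, not_not.1 hd₂, d.adj⟩

variable [Fintype V]

lemma isLocalResolvingSet_compl_of_adjSeparatedOutside [DecidableEq V] {T : Finset V}
    (hT : ∀ u ∈ T, ∀ v ∈ T, AdjSeparatedOutside G T u v) : IsLocalResolvingSet G Tᶜ := by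
  intro u v hu hv hadj
  rw [mem_compl, not_not] at hu hv
  obtain ⟨w, hwT, hw⟩ := hT u hu v hv hadj
  refine ⟨w, mem_compl.2 hwT, fun hdist => hw ?_⟩
  rw [← dist_eq_one_iff_adj, ← dist_eq_one_iff_adj, hdist]

lemma localDim_le_card_sub_three_of_adjSeparatedOutside [DecidableEq V] {a b c : V}
    (hab : a ≠ b) (hac : a ≠ c) (hbc : b ≠ c)
    (h_ab : AdjSeparatedOutside G {a, b, c} a b) (h_ac : AdjSeparatedOutside G {a, b, c} a c)
    (h_bc : AdjSeparatedOutside G {a, b, c} b c) :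
    localDim G ≤ Fintype.card V - 3 := by
  have hT : ∀ u ∈ ({a, b, c} : Finset V), ∀ v ∈ ({a, b, c} : Finset V),
      AdjSeparatedOutside G {a, b, c} u v := by
    intro u hu v hv
    simp only [mem_insert, mem_singleton] at hu hv
    rcases hu with rfl | rfl | rfl <;> rcases hv with rfl | rfl | rfl
    all_goals first
      | exact AdjSeparatedOutside.of_not_adj G.irrefl
      | assumption
      | exact AdjSeparatedOutside.symm ‹_›
  calc localDim G ≤ #({a, b, c} : Finset V)ᶜ :=
        localDim_le (isLocalResolvingSet_compl_of_adjSeparatedOutside hT)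
    _ = Fintype.card V - 3 := by rw [card_compl, card_eq_three.2 ⟨a, b, c, hab, hac, hbc, rfl⟩]

variable {C : Finset V}

lemma SimpleGraph.IsMaximumClique.exists_not_adj (hC : G.IsMaximumClique C) {u : V}
    (hu : u ∉ C) : ∃ x ∈ C, ¬G.Adj u x := by
  classical
  by_contra! h
  have hclique : G.IsClique (insert u C : Finset V) := by
    rw [coe_insert]
    exact hC.isClique.insert fun b hb _ => h b hb
  have := hC.maximum _ hclique
  rw [card_insert_of_notMem hu] at this
  omega

lemma SimpleGraph.IsMaximumClique.adjSeparatedOutside_of_mem_of_notMem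
    (hC : G.IsMaximumClique C) {T : Finset V} {x t : V} (hx : x ∈ C) (ht : t ∉ C)
    (hT : ∀ y ∈ C, y ∈ T → y = x) : AdjSeparatedOutside G T x t := by
  intro hxt
  obtain ⟨y, hy, hty⟩ := hC.exists_not_adj ht
  have hyx : y ≠ x := by
    rintro rfl
    exact hty hxt.symm
  exact ⟨y, fun hyT => hyx (hT y hy hyT), fun hiff => hty (hiff.1 (hC.isClique hx hy hyx.symm))⟩

lemma SimpleGraph.IsMaximumClique.localDim_le_of_adjSeparatedOutside [DecidableEq V]
    (hC : G.IsMaximumClique C) {u t x : V} (hu : u ∉ C) (ht : t ∉ C) (hut : u ≠ t) (hx : x ∈ C)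
    (hux : ¬G.Adj u x) (hsep : AdjSeparatedOutside G {u, x, t} u t) :
    localDim G ≤ Fintype.card V - 3 := by
  refine localDim_le_card_sub_three_of_adjSeparatedOutside (ne_of_mem_of_not_mem hx hu).symm hut
    (ne_of_mem_of_not_mem hx ht) (.of_not_adj hux) hsep
    (hC.adjSeparatedOutside_of_mem_of_notMem hx ht ?_)
  intro y hy hyT
  simp only [mem_insert, mem_singleton] at hyT
  rcases hyT with rfl | rfl | rfl
  exacts [absurd hy hu, rfl, absurd hy ht]

lemma SimpleGraph.IsMaximumClique.adj_of_forall_not_adjSeparatedOutside [DecidableEq V]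
    (hC : G.IsMaximumClique C)
    (h : ∀ a ∉ C, ∀ b ∉ C, a ≠ b → ∀ x ∈ C, ¬G.Adj a x → ¬AdjSeparatedOutside G {a, x, b} a b)
    {a b : V} (ha : a ∉ C) (hb : b ∉ C) (hab : a ≠ b) : G.Adj a b := by
  obtain ⟨x, hx, hax⟩ := hC.exists_not_adj ha
  by_contra hnadj
  exact h a ha b hb hab x hx hax (.of_not_adj hnadj)

lemma SimpleGraph.IsMaximumClique.adj_of_adj_of_forall_not_adjSeparatedOutside [DecidableEq V]
    (hC : G.IsMaximumClique C)
    (h : ∀ a ∉ C, ∀ b ∉ C, a ≠ b → ∀ x ∈ C, ¬G.Adj a x → ¬AdjSeparatedOutside G {a, x, b} a b)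
    {a b c : V} (ha : a ∉ C) (hb : b ∉ C) (hc : c ∈ C) (hac : G.Adj a c) : G.Adj b c := by
  rcases eq_or_ne a b with rfl | hab
  · exact hac
  obtain ⟨x, hx, hax⟩ := hC.exists_not_adj ha
  by_contra hbc
  refine h a ha b hb hab x hx hax fun _ => ⟨c, ?_, fun hiff => hbc (hiff.1 hac)⟩
  simp only [mem_insert, mem_singleton, not_or]
  exact ⟨ne_of_mem_of_not_mem hc ha, fun hcx => hax (hcx ▸ hac), ne_of_mem_of_not_mem hc hb⟩

lemma SimpleGraph.IsMaximumClique.exists_two_not_adj (hC : G.IsMaximumClique C)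
    (hout : ∀ a ∉ C, ∀ b ∉ C, a ≠ b → G.Adj a b)
    (hsame : ∀ a ∉ C, ∀ b ∉ C, ∀ c ∈ C, G.Adj a c → G.Adj b c)
    {u v : V} (hu : u ∉ C) (hv : v ∉ C) (huv : u ≠ v) :
    ∃ q ∈ C, ∃ q' ∈ C, q ≠ q' ∧ ¬G.Adj u q ∧ ¬G.Adj u q' := by
  classical
  have hclique : G.IsClique ((Cᶜ ∪ C.filter (G.Adj u ·) : Finset V) : Set V) := by
    intro a ha b hb hab
    simp only [coe_union, coe_compl, coe_filter, Set.mem_union, Set.mem_compl_iff, mem_coe,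
      Set.mem_ofPred_eq] at ha hb
    rcases ha with ha | ⟨ha, hua⟩ <;> rcases hb with hb | ⟨hb, hub⟩
    exacts [hout a ha b hb hab, hsame u hu a ha b hb hub, (hsame u hu b hb a ha hua).symm,
      hC.isClique ha hb hab]
  have hbound := hC.maximum _ hclique
  rw [card_union_of_disjoint (disjoint_compl_left.mono_right (filter_subset _ _))] at hbound
  have houtside : 2 ≤ #Cᶜ := by
    rw [← card_pair huv]
    exact card_le_card fun y hy => by
      rcases mem_insert.1 hy with rfl | hy <;> simp_all
  have hsplit := card_filter_add_card_filter_not (s := C) (G.Adj u ·)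
  obtain ⟨q, hq, q', hq', hqq'⟩ := one_lt_card.1 <| show 1 < #(C.filter (¬G.Adj u ·)) by omega
  rw [mem_filter] at hq hq'
  exact ⟨q, hq.1, q', hq'.1, hqq', hq.2, hq'.2⟩

lemma SimpleGraph.Connected.localDim_le_of_twins (hconn : G.Connected) (hC : G.IsMaximumClique C)
    (hout : ∀ a ∉ C, ∀ b ∉ C, a ≠ b → G.Adj a b)
    (hsame : ∀ a ∉ C, ∀ b ∉ C, ∀ c ∈ C, G.Adj a c → G.Adj b c)
    {u v : V} (hu : u ∉ C) (hv : v ∉ C) (huv : u ≠ v) : localDim G ≤ Fintype.card V - 3 := by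
  classical
  obtain ⟨p, hp, hup⟩ : ∃ p ∈ C, G.Adj u p := by
    obtain ⟨c, hc⟩ : C.Nonempty := card_pos.1 (by simpa using hC.maximum {u} (by simp))
    obtain ⟨a, ha, p, hp, hap⟩ :=
      hconn.preconnected.exists_adj_notMem_mem (s := (C : Set V)) hu hc
    exact ⟨p, hp, hsame a ha u hu p hp hap⟩
  obtain ⟨q, hq, q', hq', hqq', huq, huq'⟩ := hC.exists_two_not_adj hout hsame hu hv huv
  have hpq : p ≠ q := fun h => huq (h ▸ hup)
  refine localDim_le_card_sub_three_of_adjSeparatedOutside (ne_of_mem_of_not_mem hp hu).symm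
    (ne_of_mem_of_not_mem hq hu).symm hpq ?_ (.of_not_adj huq) ?_
  · refine fun _ => ⟨q', ?_, fun hiff => huq' (hiff.2 (hC.isClique hp hq' ?_))⟩
    · simp only [mem_insert, mem_singleton, not_or]
      exact ⟨ne_of_mem_of_not_mem hq' hu, fun h => huq' (h ▸ hup), hqq'.symm⟩
    · rintro rfl
      exact huq' hup
  · refine fun _ => ⟨v, ?_, fun hiff => huq (hsame v hv u hu q hq ?_)⟩
    · simp only [mem_insert, mem_singleton, not_or]
      exact ⟨huv.symm, (ne_of_mem_of_not_mem hp hv).symm, (ne_of_mem_of_not_mem hq hv).symm⟩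
    · exact (hiff.1 (hsame u hu v hv p hp hup).symm).symm

end UpperBound

lemma SimpleGraph.Connected.localDim_le_card_sub_three [Fintype V] {G : SimpleGraph V}
    (hconn : G.Connected) (hω : G.cliqueNum + 2 ≤ Fintype.card V) :
    localDim G ≤ Fintype.card V - 3 := by
  classical
  obtain ⟨C, hC⟩ := G.maximumClique_exists
  obtain ⟨u, hu, v, hv, huv⟩ := one_lt_card.1 <| show 1 < #Cᶜ by
    rw [card_compl, G.maximumClique_card_eq_cliqueNum C hC]
    omega
  rw [mem_compl] at hu hv
  by_cases hsep : ∃ a ∉ C, ∃ b ∉ C, a ≠ b ∧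
      ∃ x ∈ C, ¬G.Adj a x ∧ AdjSeparatedOutside G {a, x, b} a b
  · obtain ⟨a, ha, b, hb, hab, x, hx, hax, hsep⟩ := hsep
    exact hC.localDim_le_of_adjSeparatedOutside ha hb hab hx hax hsep
  · push Not at hsep
    exact hconn.localDim_le_of_twins hC
      (fun _ ha _ hb hab => hC.adj_of_forall_not_adjSeparatedOutside hsep ha hb hab)
      (fun _ ha _ hb _ hc hac => hC.adj_of_adj_of_forall_not_adjSeparatedOutside hsep ha hb hc hac)
      hu hv huv

lemma SimpleGraph.one_le_cliqueNum [Finite V] [Nonempty V] (G : SimpleGraph V) :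
    1 ≤ G.cliqueNum := by
  obtain ⟨v⟩ := ‹Nonempty V›
  simpa using IsClique.card_le_cliqueNum (G := G) (t := {v}) (tc := by simp)

/-- If `G` is connected with `ω(G) = n(G) - 3`, then `n(G) - 8 ≤ dim_l(G) ≤ n(G) - 3`. -/
theorem stmt_9 [Fintype V] (G : SimpleGraph V) (hconn : G.Connected)
    (hw : G.cliqueNum = Fintype.card V - 3) :
    Fintype.card V - 8 ≤ localDim G ∧ localDim G ≤ Fintype.card V - 3 := by
  have := hconn.nonempty
  have hpos := G.one_le_cliqueNum
  have hlower := cliqueNum_le_localDim_add_five (G := G) (by omega)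
  exact ⟨by omega, hconn.localDim_le_card_sub_three (by omega)⟩
end

section
/- Let G be a connected graph and let S ⊆ V(G) be a set of vertices such that for any two distinct vertices s, s' ∈ S lying in a common maximum clique Q, one has N_G(s) ∩ (V(G) \ Q) ≠ N_G(s') ∩ (V(G) \ Q). Then V(G) \ S is a local resolving set for G, and hence dim_l(G) ≤ n(G) - |S|. -/
/-!
Two adjacent vertices of `S` have different neighbourhood traces outside `Q`, so some vertex
`x ∉ Q` (hence `x ∉ S`) is adjacent to exactly one of them: its distance to that one is `1`
and to the other is not.
-/

open SimpleGraph

variable {V : Type*}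

theorem exists_dist_ne_of_setOf_adj_ne {G : SimpleGraph V} {p : V → Prop} {u v : V}
    (h : {x : V | p x ∧ G.Adj u x} ≠ {x : V | p x ∧ G.Adj v x}) :
    ∃ x, p x ∧ G.dist u x ≠ G.dist v x := by
  contrapose! h
  ext x
  simp only [Set.mem_ofPred_eq, ← dist_eq_one_iff_adj]
  exact and_congr_right fun hx => by rw [h x hx]

theorem localDim_le_card [Fintype V] {G : SimpleGraph V} {W : Finset V}
    (hW : IsLocalResolvingSet G W) : localDim G ≤ W.card :=
  Nat.sInf_le ⟨W, hW, rfl⟩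

theorem isLocalResolvingSet_univ_sdiff [Fintype V] [DecidableEq V] {G : SimpleGraph V}
    {Q S : Finset V} (hSQ : S ⊆ Q)
    (htrace : ∀ s ∈ S, ∀ s' ∈ S, s ≠ s' →
      {x : V | x ∉ Q ∧ G.Adj s x} ≠ {x : V | x ∉ Q ∧ G.Adj s' x}) :
    IsLocalResolvingSet G (Finset.univ \ S) := by
  intro u v hu hv hadj
  rw [Finset.mem_sdiff, not_and_not_right] at hu hv
  obtain ⟨x, hxQ, hx⟩ := exists_dist_ne_of_setOf_adj_ne
    (htrace u (hu (Finset.mem_univ u)) v (hv (Finset.mem_univ v)) hadj.ne)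
  exact ⟨x, Finset.mem_sdiff.2 ⟨Finset.mem_univ x, fun hxS => hxQ (hSQ hxS)⟩, hx⟩

theorem stmt_17_general [Fintype V] [DecidableEq V] (G : SimpleGraph V)
    (Q S : Finset V) (hSQ : S ⊆ Q)
    (htrace : ∀ s ∈ S, ∀ s' ∈ S, s ≠ s' →
      {x : V | x ∉ Q ∧ G.Adj s x} ≠ {x : V | x ∉ Q ∧ G.Adj s' x}) :
    IsLocalResolvingSet G (Finset.univ \ S) ∧
      localDim G ≤ Fintype.card V - S.card := by
  have hres := isLocalResolvingSet_univ_sdiff hSQ htrace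
  refine ⟨hres, ?_⟩
  calc localDim G ≤ (Finset.univ \ S).card := localDim_le_card hres
    _ = Fintype.card V - S.card := by
      rw [Finset.card_sdiff_of_subset (Finset.subset_univ S), Finset.card_univ]

/-- If `Q` is a maximum clique of a connected graph `G` and `S ⊆ Q` is such that distinct
vertices of `S` have distinct open-neighborhood traces on `V(G) \ Q`, then `V(G) \ S` is a
local resolving set and hence `dim_l(G) ≤ n(G) - |S|`. -/
theorem stmt_17 [Fintype V] [DecidableEq V] (G : SimpleGraph V) (hconn : G.Connected)
    (Q S : Finset V) (hQ : G.IsNClique G.cliqueNum Q) (hSQ : S ⊆ Q)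
    (htrace : ∀ s ∈ S, ∀ s' ∈ S, s ≠ s' →
      {x : V | x ∉ Q ∧ G.Adj s x} ≠ {x : V | x ∉ Q ∧ G.Adj s' x}) :
    IsLocalResolvingSet G (Finset.univ \ S) ∧
      localDim G ≤ Fintype.card V - S.card :=
  stmt_17_general G Q S hSQ htrace
end
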